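/- arXiv:1811.09568 — 3 statements merged into one kernel-verified Lean document; each statement's English description precedes it below -/
import Mathlib

section
/- For fixed probability densities f, g, the functional D ↦ ∬ [log D(X) + log(1−D(Y))] f(X) g(Y) dX dY over measurable functions D with values in (0,1) is maximized pointwise by D*(x) = f(x)/(f(x)+g(x)). -/
open Real

/-- Gibbs' inequality for one term, from `log x ≤ x - 1` at `x = u * s / a`. For `a = 0` both
logarithmic terms vanish, whatever junk value `log (0 / s)` takes. -/
lemma mul_log_le_mul_log_div_add {a s u : ℝ} (ha : 0 ≤ a) (hs : 0 < s) (hu : 0 < u) :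
    a * log u ≤ a * log (a / s) + (s * u - a) := by
  rcases ha.eq_or_lt with rfl | ha
  · simpa using (mul_pos hs hu).le
  have hlog : log (u * s / a) ≤ u * s / a - 1 := log_le_sub_one_of_pos (by positivity)
  rw [log_div (by positivity) ha.ne', log_mul hu.ne' hs.ne'] at hlog
  have hscaled := mul_le_mul_of_nonneg_left hlog ha.le
  rw [log_div ha.ne' hs.ne']
  calc a * log u ≤ a * log u - a * (log u + log s - log a) + a * (u * s / a - 1) := by linarith
    _ = a * (log a - log s) + (s * u - a) := by field_simp; ring

theorem optimal_discriminator_pointwise_general {d : ℕ}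
    (f g D : (Fin d → ℝ) → ℝ)
    (hf0 : ∀ x, 0 ≤ f x) (hg0 : ∀ x, 0 ≤ g x)
    (hfg : ∀ x, 0 < f x + g x)
    (hD : ∀ x, D x ∈ Set.Ioo (0 : ℝ) 1) :
    ∀ x, f x * Real.log (D x) + g x * Real.log (1 - D x) ≤
      f x * Real.log (f x / (f x + g x)) + g x * Real.log (g x / (f x + g x)) := by
  intro x
  obtain ⟨hD0, hD1⟩ := hD x
  have hf := mul_log_le_mul_log_div_add (hf0 x) (hfg x) hD0
  have hg := mul_log_le_mul_log_div_add (hg0 x) (hfg x) (sub_pos.mpr hD1)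
  linarith

/-- The GAN objective `∬ [log D(X) + log(1−D(Y))] f(X) g(Y) dX dY` is maximized
pointwise (in the integrand `x ↦ f x log D x + g x log(1−D x)`) by the
discriminator `D*(x) = f(x)/(f(x)+g(x))`. -/
theorem optimal_discriminator_pointwise {d : ℕ}
    (f g D : (Fin d → ℝ) → ℝ)
    (hf0 : ∀ x, 0 ≤ f x) (hg0 : ∀ x, 0 ≤ g x)
    (hfg : ∀ x, 0 < f x + g x)
    (hDmeas : Measurable D)
    (hD : ∀ x, D x ∈ Set.Ioo (0 : ℝ) 1) :
    ∀ x, f x * Real.log (D x) + g x * Real.log (1 - D x) ≤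
      f x * Real.log (f x / (f x + g x)) + g x * Real.log (g x / (f x + g x)) :=
  optimal_discriminator_pointwise_general f g D hf0 hg0 hfg hD
end

section
/- The minimax value over densities g of sup_D ∬ [log D(X)+log(1−D(Y))] f(X) g(Y) dX dY is attained at g = f, where the inner supremum is over measurable D : ℝ^d → (0,1); equivalently, the function g ↦ ∫ [f log(f/(f+g)) + g log(g/(f+g))] is minimized uniquely at g = f, with minimal value −2 log 2 (i.e., the Jensen–Shannon divergence between f and g is nonnegative and zero iff f = g). -/
/-!
With `m = (a + b) / 2`, the pointwise integrand shifted by `(a + b) log 2` equals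
`m (klFun (a / m) + klFun (b / m))`, where `klFun x = x log x + 1 - x ≥ 0` vanishes only at
`x = 1`. Since `∫ (f + g) log 2 = 2 log 2`, the objective is at least `-2 log 2`, and equality
forces the nonnegative shifted integrand to vanish a.e., i.e. `f = m = g` a.e.
-/

open MeasureTheory Real InformationTheory

lemma half_mul_klFun_two_mul_div {x s : ℝ} (hs : s ≠ 0) :
    s / 2 * klFun (2 * x / s) = x * log (x / s) + x * log 2 + s / 2 - x := by
  have hlog : x * log (2 * x / s) = x * log (x / s) + x * log 2 := by
    rcases eq_or_ne x 0 with rfl | hx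
    · simp
    rw [mul_div_assoc, log_mul two_ne_zero (div_ne_zero hx hs)]
    ring
  calc s / 2 * klFun (2 * x / s) = x * log (2 * x / s) + s / 2 - x := by
        rw [klFun_apply]; field_simp
    _ = _ := by rw [hlog]

lemma mul_log_div_add_mul_log_div_add_eq_klFun {a b : ℝ} (hab : a + b ≠ 0) :
    a * log (a / (a + b)) + b * log (b / (a + b)) + (a + b) * log 2
      = (a + b) / 2 * (klFun (2 * a / (a + b)) + klFun (2 * b / (a + b))) := by
  rw [mul_add, half_mul_klFun_two_mul_div hab, half_mul_klFun_two_mul_div hab]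
  ring

lemma mul_log_div_add_mul_log_div_add_nonneg {a b : ℝ} (ha : 0 ≤ a) (hb : 0 ≤ b)
    (hab : 0 < a + b) :
    0 ≤ a * log (a / (a + b)) + b * log (b / (a + b)) + (a + b) * log 2 := by
  rw [mul_log_div_add_mul_log_div_add_eq_klFun hab.ne']
  have hka := klFun_nonneg (x := 2 * a / (a + b)) (by positivity)
  have hkb := klFun_nonneg (x := 2 * b / (a + b)) (by positivity)
  positivity

lemma eq_of_mul_log_div_add_mul_log_div_add_eq_zero {a b : ℝ} (ha : 0 ≤ a) (hb : 0 ≤ b)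
    (hab : 0 < a + b) (h : a * log (a / (a + b)) + b * log (b / (a + b)) + (a + b) * log 2 = 0) :
    a = b := by
  rw [mul_log_div_add_mul_log_div_add_eq_klFun hab.ne'] at h
  have hka := klFun_nonneg (x := 2 * a / (a + b)) (by positivity)
  have hkb := klFun_nonneg (x := 2 * b / (a + b)) (by positivity)
  have hka0 : klFun (2 * a / (a + b)) = 0 := by
    rcases mul_eq_zero.1 h with h | h <;> linarith
  rw [klFun_eq_zero_iff (by positivity), div_eq_one_iff_eq hab.ne'] at hka0
  linarith

lemma mul_log_div_add_self_add_mul_log_div_add_self (a : ℝ) :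
    a * log (a / (a + a)) + a * log (a / (a + a)) = -(2 * log 2) * a := by
  rcases eq_or_ne a 0 with rfl | ha
  · simp
  rw [← two_mul a, div_mul_cancel_right₀ ha, log_inv]
  ring

/-- The function `g ↦ ∫ [f log(f/(f+g)) + g log(g/(f+g))]` over probability densities is
minimized uniquely (up to a.e. equality) at `g = f`, with minimal value `−2 log 2`. -/
theorem jensen_shannon_min_at_f {d : ℕ}
    (f g : (Fin d → ℝ) → ℝ)
    (hfint : Integrable f) (hgint : Integrable g)
    (hf0 : ∀ x, 0 ≤ f x) (hg0 : ∀ x, 0 ≤ g x)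
    (hf1 : ∫ x, f x = 1) (hg1 : ∫ x, g x = 1)
    (hfgpos : ∀ x, 0 < f x + g x)
    (hint : Integrable (fun x =>
      f x * Real.log (f x / (f x + g x)) + g x * Real.log (g x / (f x + g x)))) :
    (-(2 * Real.log 2) ≤
        ∫ x, (f x * Real.log (f x / (f x + g x)) + g x * Real.log (g x / (f x + g x)))) ∧
    (∫ x, (f x * Real.log (f x / (f x + f x)) + f x * Real.log (f x / (f x + f x)))
        = -(2 * Real.log 2)) ∧
    ((∫ x, (f x * Real.log (f x / (f x + g x)) + g x * Real.log (g x / (f x + g x))))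
        = -(2 * Real.log 2) → g =ᵐ[volume] f) := by
  set φ := fun x => f x * log (f x / (f x + g x)) + g x * log (g x / (f x + g x))
  have hlog2int : Integrable fun x => (f x + g x) * log 2 := (hfint.add hgint).mul_const _
  have hshift : ∫ x, (φ x + (f x + g x) * log 2) = (∫ x, φ x) + 2 * log 2 := by
    rw [integral_add hint hlog2int, integral_mul_const, integral_add hfint hgint, hf1, hg1]
    ring
  have hnonneg : ∀ x, 0 ≤ φ x + (f x + g x) * log 2 := fun x =>
    mul_log_div_add_mul_log_div_add_nonneg (hf0 x) (hg0 x) (hfgpos x)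
  refine ⟨?_, ?_, fun hmin => ?_⟩
  · have : 0 ≤ ∫ x, (φ x + (f x + g x) * log 2) := integral_nonneg hnonneg
    linarith
  · simp_rw [mul_log_div_add_self_add_mul_log_div_add_self, integral_const_mul, hf1, mul_one]
  · have hzero : ∫ x, (φ x + (f x + g x) * log 2) = 0 := by
      rw [hshift, hmin]; ring
    filter_upwards [(integral_eq_zero_iff_of_nonneg hnonneg (hint.add hlog2int)).1 hzero]
      with x hx
    exact (eq_of_mul_log_div_add_mul_log_div_add_eq_zero (hf0 x) (hg0 x) (hfgpos x) hx).symm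
end

section
/- For fixed probability densities f, g, the supremum over measurable functions D taking values in [e^{−M}, e^{M}] of the objective E[log D(X)] − E[log D(Y)] = ∫ log D(x) (f(x)−g(x)) dx equals M·∥f−g∥₁, attained by D(x) = e^{M·sgn(f(x)−g(x))}; minimizing this over g gives g = f. -/
open MeasureTheory

/-- The supremum over measurable `D : ℝ^d → [e^{−M}, e^{M}]` of
`E[log D(X)] − E[log D(Y)] = ∫ log D (f − g)` equals `M·‖f−g‖₁`,
attained by `D(x) = e^{M·sgn(f(x)−g(x))}`; minimizing over densities `g`
yields `g = f` (a.e.). -/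
theorem sup_logbounded_discriminator_total_variation {d : ℕ}
    (M : ℝ) (hM : 0 < M)
    (f g : (Fin d → ℝ) → ℝ)
    (hfint : Integrable f) (hgint : Integrable g)
    (hf0 : ∀ x, 0 ≤ f x) (hg0 : ∀ x, 0 ≤ g x)
    (hf1 : ∫ x, f x = 1) (hg1 : ∫ x, g x = 1) :
    (∀ D : (Fin d → ℝ) → ℝ, Measurable D →
        (∀ x, D x ∈ Set.Icc (Real.exp (-M)) (Real.exp M)) →
        Integrable (fun x => Real.log (D x) * (f x - g x)) →
        ∫ x, Real.log (D x) * (f x - g x) ≤ M * ∫ x, |f x - g x|) ∧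
    (∫ x, Real.log (Real.exp (M * Real.sign (f x - g x))) * (f x - g x)
        = M * ∫ x, |f x - g x|) ∧
    (0 ≤ M * ∫ x, |f x - g x| ∧
      ((M * ∫ x, |f x - g x|) = 0 ↔ g =ᵐ[volume] f)) := by
  have habs : Integrable (fun x => |f x - g x|) := (hfint.sub hgint).abs
  have habs0 : ∀ x, 0 ≤ |f x - g x| := fun x => abs_nonneg _
  have hint0 : 0 ≤ ∫ x, |f x - g x| := integral_nonneg habs0
  refine ⟨?_, ?_, ?_, ?_⟩
  · intro D hD hbound hDint
    have hpt : ∀ x, Real.log (D x) * (f x - g x) ≤ M * |f x - g x| := by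
      intro x
      obtain ⟨h1, h2⟩ := hbound x
      have hDpos : 0 < D x := lt_of_lt_of_le (Real.exp_pos _) h1
      have hlog : |Real.log (D x)| ≤ M := by
        rw [abs_le]
        constructor
        · calc (-M : ℝ) = Real.log (Real.exp (-M)) := (Real.log_exp _).symm
            _ ≤ Real.log (D x) := Real.log_le_log (Real.exp_pos _) h1
        · calc Real.log (D x) ≤ Real.log (Real.exp M) :=
              Real.log_le_log hDpos h2
            _ = M := Real.log_exp _
      calc Real.log (D x) * (f x - g x) ≤ |Real.log (D x) * (f x - g x)| :=
            le_abs_self _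
        _ = |Real.log (D x)| * |f x - g x| := abs_mul _ _
        _ ≤ M * |f x - g x| :=
            mul_le_mul_of_nonneg_right hlog (abs_nonneg _)
    calc ∫ x, Real.log (D x) * (f x - g x)
        ≤ ∫ x, M * |f x - g x| :=
          integral_mono hDint (habs.const_mul M) hpt
      _ = M * ∫ x, |f x - g x| := integral_const_mul M _
  · have hpt : ∀ x, Real.log (Real.exp (M * Real.sign (f x - g x))) * (f x - g x)
        = M * |f x - g x| := by
      intro x
      rw [Real.log_exp]
      rcases lt_trichotomy (f x - g x) 0 with h | h | h
      · rw [Real.sign_of_neg h, abs_of_neg h]; ring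
      · rw [h, abs_zero]; ring
      · rw [Real.sign_of_pos h, abs_of_pos h]; ring
    simp_rw [hpt]
    exact integral_const_mul M _
  · exact mul_nonneg hM.le hint0
  · rw [mul_eq_zero]
    constructor
    · rintro (h | h)
      · exact absurd h hM.ne'
      · have := (integral_eq_zero_iff_of_nonneg habs0 habs).mp h
        filter_upwards [this] with x hx
        have : f x - g x = 0 := abs_eq_zero.mp hx
        linarith
    · intro h
      right
      rw [integral_eq_zero_iff_of_nonneg habs0 habs]
      filter_upwards [h] with x hx
      simp [hx]
end
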